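/- arXiv:1309.2340 — 2 statements merged into one kernel-verified Lean document; each statement's English description precedes it below -/
import Mathlib

section
/- If A is a bi-connected set of vertices in ℤ^d, then each of the three sets ∂_in A ∪ ∂_out A, A^{++} \ A, and A \ A^{--} is a connected set of vertices of ℤ^d. -/
/-!
Fix a crossing edge `ab` of `A` (with `a ∈ A`, `b ∉ A`), let `S` be the set in question and `K`
the component of `b` in `S`. Over `ZMod 2`, the edge function that is `1` exactly on the crossing
edges whose endpoint outside `A` lies in `K` sums to zero around every unit square: a local check,
since the crossing edges of a square pair up so that the outer endpoints of a pair coincide or are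
joined inside `S` by edges of the square. As `ℤ^d` is simply connected, it is therefore the
coboundary of a function `g`. The function `g` is constant on `A` and on `Aᶜ`, because both are
connected and the edge function vanishes inside them; so it takes the same value `1` on all
crossing edges. Hence every outer endpoint of a crossing edge lies in `K`, and every vertex of
`S` is joined to one inside `S`. The third set is the second one for `Aᶜ`.
-/
namespace P3C

def latticeGraph (d : ℕ) : SimpleGraph (Fin d → ℤ) where
  Adj v w := ∃ i, (w i = v i + 1 ∨ w i = v i - 1) ∧ ∀ j, j ≠ i → w j = v j
  symm := by
    constructor
    rintro v w ⟨i, h1, h2⟩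
    exact ⟨i, by omega, fun j hj => (h2 j hj).symm⟩
  loopless := by
    constructor
    rintro v ⟨i, h1, _⟩
    omega

def vplus (d : ℕ) (U : Set (Fin d → ℤ)) : Set (Fin d → ℤ) :=
  {u | u ∈ U ∨ ∃ w ∈ U, (latticeGraph d).Adj u w}

def vminus (d : ℕ) (U : Set (Fin d → ℤ)) : Set (Fin d → ℤ) :=
  {u | u ∈ U ∧ ∀ w, (latticeGraph d).Adj u w → w ∈ U}

def inBdry (d : ℕ) (U : Set (Fin d → ℤ)) : Set (Fin d → ℤ) := U \ vminus d U

def outBdry (d : ℕ) (U : Set (Fin d → ℤ)) : Set (Fin d → ℤ) := vplus d U \ U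

def ConnectedIn {V : Type*} (G : SimpleGraph V) (S : Set V) : Prop := (G.induce S).Connected

def BiConnected (d : ℕ) (U : Set (Fin d → ℤ)) : Prop :=
  U ≠ ∅ ∧ U ≠ Set.univ ∧ ConnectedIn (latticeGraph d) U ∧ ConnectedIn (latticeGraph d) Uᶜ

def edgeBdry (d : ℕ) (U : Set (Fin d → ℤ)) : Set ((Fin d → ℤ) × (Fin d → ℤ)) :=
  {p | (latticeGraph d).Adj p.1 p.2 ∧ ((p.1 ∈ U ∧ p.2 ∉ U) ∨ (p.2 ∈ U ∧ p.1 ∉ U))}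

def IsFourCycle (d : ℕ) (v00 v01 v11 v10 : Fin d → ℤ) : Prop :=
  (latticeGraph d).Adj v00 v01 ∧ (latticeGraph d).Adj v01 v11 ∧
  (latticeGraph d).Adj v11 v10 ∧ (latticeGraph d).Adj v10 v00 ∧ v00 ≠ v11 ∧ v01 ≠ v10

def BoundaryDisjoint (d : ℕ) (U1 U2 : Set (Fin d → ℤ)) : Prop :=
  edgeBdry d U1 ∩ edgeBdry d U2 = ∅ ∧
  ¬ ∃ v00 v01 v11 v10, IsFourCycle d v00 v01 v11 v10 ∧
    v00 ∈ U1ᶜ ∩ U2ᶜ ∧ v01 ∈ U1ᶜ ∩ U2 ∧ v11 ∈ U1 ∩ U2 ∧ v10 ∈ U1 ∩ U2ᶜ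

def translates (n d : ℕ) (U : Set (Fin d → ℤ)) : Set (Set (Fin d → ℤ)) :=
  {W | ∃ x : Fin d → ℤ, (∀ i, (n : ℤ) ∣ x i) ∧ W = (fun u => u + x) '' U}

def TranslationRespecting (n d : ℕ) (U : Set (Fin d → ℤ)) : Prop :=
  BiConnected d U ∧
  ∀ U1 ∈ translates n d U, ∀ U2 ∈ translates n d U, U1 ≠ U2 → BoundaryDisjoint d U1 U2

def TypeZero (n d : ℕ) (U : Set (Fin d → ℤ)) : Prop :=
  TranslationRespecting n d U ∧ (translates n d U).Nontrivial ∧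
  ∀ A ∈ translates n d U, ∀ B ∈ translates n d U, A ⊆ B ∨ B ⊆ A

noncomputable def setDist (d : ℕ) (A B : Set (Fin d → ℤ)) : ℕ :=
  sInf {k | ∃ a ∈ A, ∃ b ∈ B, (latticeGraph d).dist a b = k}

def IsLatticeHHF (d : ℕ) (h : (Fin d → ℤ) → ℤ) : Prop :=
  ∀ v w, (latticeGraph d).Adj v w → |h v - h w| = 1

def homZeroLattice (d : ℕ) : Set ((Fin d → ℤ) → ℤ) :=
  {h | IsLatticeHHF d h ∧ h 0 = 0}

def IsQP (n d : ℕ) (m : Fin d → ℤ) (h : (Fin d → ℤ) → ℤ) : Prop :=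
  h ∈ homZeroLattice d ∧ ∀ (v : Fin d → ℤ) (i : Fin d), h (v + Pi.single i (n : ℤ)) = h v + m i

def QPset (n d : ℕ) : Set ((Fin d → ℤ) → ℤ) :=
  {h | ∃ m : Fin d → ℤ, (∀ i, (6 : ℤ) ∣ m i ∧ |m i| ≤ (n : ℤ)) ∧ IsQP n d m h}

def compIn {V : Type*} (G : SimpleGraph V) (S : Set V) (u : V) : Set V :=
  {w | ∃ (hu : u ∈ S) (hw : w ∈ S), (G.induce S).Reachable ⟨u, hu⟩ ⟨w, hw⟩}

def subLL (d : ℕ) (h : (Fin d → ℤ) → ℤ) (k : ℤ) (u : Fin d → ℤ) : Set (Fin d → ℤ) :=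
  compIn (latticeGraph d) {w | h w ≠ k + 1} u

def subLC (d : ℕ) (h : (Fin d → ℤ) → ℤ) (k : ℤ) (u v : Fin d → ℤ) : Set (Fin d → ℤ) :=
  (compIn (latticeGraph d) (subLL d h k u)ᶜ v)ᶜ

def IsSublevelComponent (d : ℕ) (h : (Fin d → ℤ) → ℤ) (A : Set (Fin d → ℤ)) : Prop :=
  ∃ u v k, h u ≤ k ∧ k < h v ∧ A = subLC d h k u v

def sepComps (d : ℕ) (h : (Fin d → ℤ) → ℤ) (u v : Fin d → ℤ) : Set (Set (Fin d → ℤ)) :=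
  {A | IsSublevelComponent d h A ∧ u ∈ A ∧ v ∉ A}

def cycleEdge (d : ℕ) (v00 v01 v11 v10 : Fin d → ℤ) (e : (Fin d → ℤ) × (Fin d → ℤ)) : Prop :=
  ({e.1, e.2} : Set (Fin d → ℤ)) = {v00, v01} ∨ ({e.1, e.2} : Set (Fin d → ℤ)) = {v01, v11} ∨
  ({e.1, e.2} : Set (Fin d → ℤ)) = {v11, v10} ∨ ({e.1, e.2} : Set (Fin d → ℤ)) = {v10, v00}

def bdryGraph (d : ℕ) (U : Set (Fin d → ℤ)) : SimpleGraph (Fin d → ℤ) where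
  Adj u v := u ≠ v ∧ ∃ eu ev, eu ∈ edgeBdry d U ∧ ev ∈ edgeBdry d U ∧
    (u = eu.1 ∨ u = eu.2) ∧ (v = ev.1 ∨ v = ev.2) ∧
    ∃ a b c e, IsFourCycle d a b c e ∧ cycleEdge d a b c e eu ∧ cycleEdge d a b c e ev
  symm := by
    constructor
    rintro u v ⟨hne, eu, ev, h1, h2, h3, h4, a, b, c, e, hc, hcu, hcv⟩
    exact ⟨hne.symm, ev, eu, h2, h1, h4, h3, a, b, c, e, hc, hcv, hcu⟩
  loopless := ⟨fun u h => h.1 rfl⟩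

/-! Torus definitions -/

def torusAdj (n d : ℕ) (v w : Fin d → ZMod n) : Prop :=
  ∃ i, (w i = v i + 1 ∨ w i = v i - 1) ∧ ∀ j, j ≠ i → w j = v j

def IsProperColoring (n d : ℕ) (f : (Fin d → ZMod n) → Fin 3) : Prop :=
  ∀ v w, torusAdj n d v w → f v ≠ f w

def torusColorings (n d : ℕ) : Set ((Fin d → ZMod n) → Fin 3) :=
  {f | IsProperColoring n d f}

def colZero (n d : ℕ) : Set ((Fin d → ZMod n) → Fin 3) :=
  {f | IsProperColoring n d f ∧ f 0 = 0}

def IsTorusHHF (n d : ℕ) (h : (Fin d → ZMod n) → ℤ) : Prop :=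
  ∀ v w, torusAdj n d v w → |h v - h w| = 1

def torusHomZero (n d : ℕ) : Set ((Fin d → ZMod n) → ℤ) :=
  {h | IsTorusHHF n d h ∧ h 0 = 0}

noncomputable def cp (n d : ℕ) (par : ℕ) (k : Fin 3) (f : (Fin d → ZMod n) → Fin 3) : ℝ :=
  (Nat.card {v : Fin d → ZMod n | (∑ j, (v j).val) % 2 = par ∧ f v = k} : ℝ) /
  (Nat.card {v : Fin d → ZMod n | (∑ j, (v j).val) % 2 = par} : ℝ)

def latticeProj (n d : ℕ) (v : Fin d → ℤ) : Fin d → ZMod n := fun i => (v i : ZMod n)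

def toCol (n d : ℕ) (h : (Fin d → ℤ) → ℤ) (x : Fin d → ZMod n) : Fin 3 :=
  ⟨(h (fun i => ((x i).val : ℤ)) % 3).toNat, by
    have h1 : (0 : ℤ) ≤ h (fun i => ((x i).val : ℤ)) % 3 := Int.emod_nonneg _ (by norm_num)
    have h2 : h (fun i => ((x i).val : ℤ)) % 3 < 3 := Int.emod_lt_of_pos _ (by norm_num)
    omega⟩

end P3C

lemma SimpleGraph.Reachable.eq_of_forall_adj {V β : Type*} {G : SimpleGraph V} {φ : V → β}
    (hφ : ∀ x y, G.Adj x y → φ x = φ y) {x y : V} (h : G.Reachable x y) : φ x = φ y := by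
  rw [SimpleGraph.reachable_iff_reflTransGen] at h
  induction h with
  | refl => rfl
  | tail _ hyz ih => exact ih.trans (hφ _ _ hyz)

namespace P3C

variable {d : ℕ}

local notation "𝐞" i:max => (Pi.single i 1 : Fin _ → ℤ)

lemma latticeGraph_adj_add_single (u : Fin d → ℤ) (i : Fin d) :
    (latticeGraph d).Adj u (u + 𝐞 i) :=
  ⟨i, Or.inl (by simp), fun j hj => by simp [Pi.single_eq_of_ne hj]⟩

lemma latticeGraph_adj_iff {u v : Fin d → ℤ} :
    (latticeGraph d).Adj u v ↔ ∃ i, v = u + 𝐞 i ∨ u = v + 𝐞 i := by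
  refine ⟨fun ⟨i, hi, hj⟩ => ⟨i, ?_⟩, ?_⟩
  · rcases hi with hi | hi <;> [left; right] <;> ext j <;> by_cases h : j = i <;>
      simp_all [Pi.single_eq_of_ne]
  · rintro ⟨i, rfl | rfl⟩
    exacts [latticeGraph_adj_add_single u i, (latticeGraph_adj_add_single v i).symm]

lemma latticeGraph_reachable_add_smul (u : Fin d → ℤ) (i : Fin d) (t : ℤ) :
    (latticeGraph d).Reachable u (u + t • 𝐞 i) := by
  induction t using Int.induction_on with
  | zero => simp
  | succ t ih =>
    refine ih.trans ?_
    rw [add_smul, one_smul, ← add_assoc]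
    exact (latticeGraph_adj_add_single _ i).reachable
  | pred t ih =>
    refine ih.trans ?_
    rw [show u + -(t : ℤ) • 𝐞 i = u + (-(t : ℤ) - 1) • 𝐞 i + 𝐞 i by module]
    exact (latticeGraph_adj_add_single _ i).reachable.symm

lemma latticeGraph_connected : (latticeGraph d).Connected := by
  have hreach (u : Fin d → ℤ) : (latticeGraph d).Reachable 0 u := by
    rw [← Finset.univ_sum_single u]
    induction (Finset.univ : Finset (Fin d)) using Finset.induction_on with
    | empty => simp
    | insert j s hj ih =>
      rw [Finset.sum_insert hj, add_comm]
      simpa [← Pi.single_smul] using ih.trans (latticeGraph_reachable_add_smul _ j (u j))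
  exact ⟨fun u v => (hreach u).symm.trans (hreach v)⟩

lemma BiConnected.exists_adj_mem_not_mem {A : Set (Fin d → ℤ)} (hA : BiConnected d A) :
    ∃ x y, (latticeGraph d).Adj x y ∧ x ∈ A ∧ y ∉ A := by
  obtain ⟨a, ha⟩ := Set.nonempty_iff_ne_empty.2 hA.1
  obtain ⟨b, hb⟩ := Set.nonempty_compl.2 hA.2.1
  obtain ⟨p⟩ := latticeGraph_connected.preconnected a b
  obtain ⟨e, -, he, he'⟩ := p.exists_boundary_dart A ha hb
  exact ⟨e.fst, e.snd, e.adj, he, he'⟩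

noncomputable def antideriv {G : Type*} [AddCommGroup G] (ψ : ℤ → G) (t : ℤ) : G :=
  ∑ s ∈ Finset.Ico 0 t, ψ s - ∑ s ∈ Finset.Ico t 0, ψ s

lemma antideriv_add_one {G : Type*} [AddCommGroup G] (ψ : ℤ → G) (t : ℤ) :
    antideriv ψ (t + 1) = antideriv ψ t + ψ t := by
  rcases le_or_gt 0 t with ht | ht
  · rw [antideriv, antideriv, ← Finset.insert_Ico_right_eq_Ico_add_one ht,
      Finset.sum_insert Finset.right_notMem_Ico, Finset.Ico_eq_empty_of_le (by omega : 0 ≤ t + 1),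
      Finset.Ico_eq_empty_of_le ht]
    abel
  · rw [antideriv, antideriv, ← Finset.insert_Ico_add_one_left_eq_Ico ht,
      Finset.sum_insert (by simp), Finset.Ico_eq_empty_of_le (by omega : t + 1 ≤ 0),
      Finset.Ico_eq_empty_of_le ht.le]
    abel

-- `ω u i` is the value of the form on the edge from `u` to `u + 𝐞 i`.
def IsClosedForm {G : Type*} [AddCommGroup G] (ω : (Fin d → ℤ) → Fin d → G) : Prop :=
  ∀ u i j, ω u i + ω (u + 𝐞 i) j = ω u j + ω (u + 𝐞 j) i

lemma IsClosedForm.exists_potential_insert {G : Type*} [AddCommGroup G]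
    {ω : (Fin d → ℤ) → Fin d → G} (hω : IsClosedForm ω) {I : Finset (Fin d)} {k : Fin d}
    (hk : k ∉ I) {g : (Fin d → ℤ) → G} (hg : ∀ u, ∀ i ∈ I, g (u + 𝐞 i) = g u + ω u i) :
    ∃ g' : (Fin d → ℤ) → G, ∀ u, ∀ i ∈ insert k I, g' (u + 𝐞 i) = g' u + ω u i := by
  -- `φ` measures the failure of `g` in direction `k`; it is invariant in the directions of `I`,
  -- so integrating it along the `k`-th coordinate corrects `g` without spoiling those directions.
  set φ : (Fin d → ℤ) → G := fun u => ω u k + g u - g (u + 𝐞 k)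
  have hφ (u) (i) (hi : i ∈ I) : φ (u + 𝐞 i) = φ u := by
    simp only [φ]
    rw [hg u i hi, add_right_comm u (𝐞 i) (𝐞 k), hg (u + 𝐞 k) i hi]
    have := hω u i k
    rw [show ω (u + 𝐞 i) k + (g u + ω u i) - (g (u + 𝐞 k) + ω (u + 𝐞 k) i) =
      (ω u i + ω (u + 𝐞 i) k) - ω (u + 𝐞 k) i + g u - g (u + 𝐞 k) by abel, this]
    abel
  refine ⟨fun u => g u + antideriv (fun s => φ (Function.update u k s)) (u k), fun u i hi => ?_⟩
  rcases Finset.mem_insert.mp hi with rfl | hi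
  · have hupd : ∀ s, Function.update (u + 𝐞 i) i s = Function.update u i s := fun s => by
      ext j; by_cases hj : j = i <;> simp [hj]
    simp only [hupd, Pi.add_apply, Pi.single_eq_same, antideriv_add_one, Function.update_eq_self,
      φ]
    abel
  · have hik : i ≠ k := ne_of_mem_of_not_mem hi hk
    have hupd : ∀ s, Function.update (u + 𝐞 i) k s = Function.update u k s + 𝐞 i := fun s => by
      ext j; by_cases hj : j = k <;> simp [hj, hik.symm]
    simp only [hupd, hφ _ i hi, Pi.add_apply, Pi.single_eq_of_ne hik.symm, add_zero, hg u i hi]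
    abel

theorem IsClosedForm.exists_potential {G : Type*} [AddCommGroup G]
    {ω : (Fin d → ℤ) → Fin d → G} (hω : IsClosedForm ω) :
    ∃ g : (Fin d → ℤ) → G, ∀ u i, g (u + 𝐞 i) = g u + ω u i := by
  obtain ⟨g, hg⟩ : ∃ g : (Fin d → ℤ) → G, ∀ u, ∀ i ∈ (Finset.univ : Finset (Fin d)),
      g (u + 𝐞 i) = g u + ω u i := by
    induction (Finset.univ : Finset (Fin d)) using Finset.induction_on with
    | empty => exact ⟨0, by simp⟩
    | insert k I hk ih =>
      obtain ⟨g, hg⟩ := ih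
      exact hω.exists_potential_insert hk hg
  exact ⟨g, fun u i => hg u i (Finset.mem_univ i)⟩

lemma exists_potential_of_isClosedForm {f : (Fin d → ℤ) → (Fin d → ℤ) → ZMod 2}
    (hsymm : ∀ x y, f x y = f y x) (hf : IsClosedForm fun u i => f u (u + 𝐞 i)) :
    ∃ g : (Fin d → ℤ) → ZMod 2, ∀ x y, (latticeGraph d).Adj x y → f x y = g x + g y := by
  obtain ⟨g, hg⟩ := hf.exists_potential
  refine ⟨g, fun x y hxy => ?_⟩
  obtain ⟨i, rfl | rfl⟩ := latticeGraph_adj_iff.mp hxy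
  · rw [hg, ← add_assoc, CharTwo.add_self_eq_zero, zero_add]
  · rw [hsymm, hg, add_comm (g y), add_assoc, CharTwo.add_self_eq_zero, add_zero]

lemma crossing_eq_of_isClosedForm {A : Set (Fin d → ℤ)} (hA : ConnectedIn (latticeGraph d) A)
    (hAc : ConnectedIn (latticeGraph d) Aᶜ) {f : (Fin d → ℤ) → (Fin d → ℤ) → ZMod 2}
    (hsymm : ∀ x y, f x y = f y x) (hf : IsClosedForm fun u i => f u (u + 𝐞 i))
    (h0 : ∀ x y, (latticeGraph d).Adj x y → (x ∈ A ↔ y ∈ A) → f x y = 0)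
    {x y x' y' : Fin d → ℤ} (hxy : (latticeGraph d).Adj x y) (hx : x ∈ A) (hy : y ∉ A)
    (hxy' : (latticeGraph d).Adj x' y') (hx' : x' ∈ A) (hy' : y' ∉ A) : f x y = f x' y' := by
  obtain ⟨g, hg⟩ := exists_potential_of_isClosedForm hsymm hf
  have hconst {S : Set (Fin d → ℤ)} (hS : ConnectedIn (latticeGraph d) S)
      (hS0 : ∀ x y, (latticeGraph d).Adj x y → x ∈ S → y ∈ S → f x y = 0)
      {x y : Fin d → ℤ} (hx : x ∈ S) (hy : y ∈ S) : g x = g y :=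
    (hS.preconnected ⟨x, hx⟩ ⟨y, hy⟩).eq_of_forall_adj (φ := g ∘ Subtype.val) fun a b hab =>
      CharTwo.add_eq_zero.mp ((hg a.1 b.1 hab).symm.trans (hS0 a.1 b.1 hab a.2 b.2))
  rw [hg x y hxy, hg x' y' hxy',
    hconst hA (fun a b hab ha hb => h0 a b hab (iff_of_true ha hb)) hx hx',
    hconst hAc (fun a b hab ha hb => h0 a b hab (iff_of_false ha hb)) hy hy']

open Classical in
noncomputable def crossingIndicator (A K : Set (Fin d → ℤ)) (x y : Fin d → ℤ) : ZMod 2 :=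
  if x ∈ A ∧ y ∉ A ∧ y ∈ K ∨ y ∈ A ∧ x ∉ A ∧ x ∈ K then 1 else 0

lemma crossingIndicator_comm (A K : Set (Fin d → ℤ)) (x y : Fin d → ℤ) :
    crossingIndicator A K x y = crossingIndicator A K y x := by
  classical
  unfold crossingIndicator
  exact if_congr or_comm rfl rfl

lemma mem_of_isClosedForm_crossingIndicator {A K : Set (Fin d → ℤ)}
    (hA : ConnectedIn (latticeGraph d) A) (hAc : ConnectedIn (latticeGraph d) Aᶜ)
    (hK : IsClosedForm fun u i => crossingIndicator A K u (u + 𝐞 i))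
    {a b : Fin d → ℤ} (hab : (latticeGraph d).Adj a b) (ha : a ∈ A) (hb : b ∉ A) (hbK : b ∈ K)
    {x y : Fin d → ℤ} (hxy : (latticeGraph d).Adj x y) (hx : x ∈ A) (hy : y ∉ A) : y ∈ K := by
  have h := crossing_eq_of_isClosedForm hA hAc (crossingIndicator_comm A K) hK
    (fun x y _ hxy => by unfold crossingIndicator; rw [if_neg]; tauto) hxy hx hy hab ha hb
  by_contra hyK
  simp [crossingIndicator, hx, hy, hyK, ha, hb, hbK] at h

lemma isClosedForm_of_square {G : Type*} [AddCommGroup G] {f : (Fin d → ℤ) → (Fin d → ℤ) → G}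
    (hf : ∀ v₁ v₂ v₃ v₄, (latticeGraph d).Adj v₁ v₂ → (latticeGraph d).Adj v₂ v₃ →
      (latticeGraph d).Adj v₃ v₄ → (latticeGraph d).Adj v₄ v₁ →
      f v₁ v₂ + f v₂ v₃ = f v₁ v₄ + f v₄ v₃) :
    IsClosedForm fun u i => f u (u + 𝐞 i) := by
  intro u i j
  have h₃₄ := (latticeGraph_adj_add_single (u + 𝐞 j) i).symm
  show f u (u + 𝐞 i) + f (u + 𝐞 i) (u + 𝐞 i + 𝐞 j) = f u (u + 𝐞 j) + f (u + 𝐞 j) (u + 𝐞 j + 𝐞 i)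
  rw [add_right_comm u (𝐞 j) (𝐞 i)] at h₃₄ ⊢
  exact hf _ _ _ _ (latticeGraph_adj_add_single u i) (latticeGraph_adj_add_single _ j) h₃₄
    (latticeGraph_adj_add_single u j).symm

section Components

variable {V : Type*} {G : SimpleGraph V} {S : Set V}

lemma mem_compIn_self {b : V} (hb : b ∈ S) : b ∈ compIn G S b := ⟨hb, hb, .rfl⟩

lemma mem_compIn_iff_of_adj {b x y : V} (hxy : G.Adj x y) (hx : x ∈ S) (hy : y ∈ S) :
    x ∈ compIn G S b ↔ y ∈ compIn G S b := by
  have hxy' : (G.induce S).Adj ⟨x, hx⟩ ⟨y, hy⟩ := hxy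
  exact ⟨fun ⟨hb, _, h⟩ => ⟨hb, hy, h.trans hxy'.reachable⟩,
    fun ⟨hb, _, h⟩ => ⟨hb, hx, h.trans hxy'.symm.reachable⟩⟩

lemma connectedIn_of_forall_mem_compIn {b : V} (hb : b ∈ S) (h : ∀ x ∈ S, x ∈ compIn G S b) :
    ConnectedIn G S := by
  refine (SimpleGraph.connected_iff _).mpr ⟨fun x y => ?_, ⟨⟨b, hb⟩⟩⟩
  obtain ⟨_, _, hx⟩ := h x x.2
  obtain ⟨_, _, hy⟩ := h y y.2
  exact hx.symm.trans hy

end Components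

lemma mem_inBdry_of_adj {A : Set (Fin d → ℤ)} {x y : Fin d → ℤ} (hxy : (latticeGraph d).Adj x y)
    (hx : x ∈ A) (hy : y ∉ A) : x ∈ inBdry d A :=
  ⟨hx, fun h => hy (h.2 y hxy)⟩

lemma mem_outBdry_of_adj {A : Set (Fin d → ℤ)} {x y : Fin d → ℤ} (hxy : (latticeGraph d).Adj x y)
    (hx : x ∈ A) (hy : y ∉ A) : y ∈ outBdry d A :=
  ⟨Or.inr ⟨x, hx, hxy.symm⟩, hy⟩

lemma mem_vplus_vplus_diff_of_adj {A : Set (Fin d → ℤ)} {x y : Fin d → ℤ}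
    (hxy : (latticeGraph d).Adj x y) (hx : x ∈ A) (hy : y ∉ A) : y ∈ vplus d (vplus d A) \ A :=
  ⟨Or.inl (mem_outBdry_of_adj hxy hx hy).1, hy⟩

lemma mem_vplus_vplus_diff_of_adj_adj {A : Set (Fin d → ℤ)} {x y z : Fin d → ℤ}
    (hxy : (latticeGraph d).Adj x y) (hyz : (latticeGraph d).Adj y z) (hx : x ∈ A) (hz : z ∉ A) :
    z ∈ vplus d (vplus d A) \ A :=
  ⟨Or.inr ⟨y, Or.inr ⟨x, hx, hxy.symm⟩, hyz.symm⟩, hz⟩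

lemma isClosedForm_crossingIndicator_of_boundary {A K S : Set (Fin d → ℤ)}
    (hK : ∀ x y, (latticeGraph d).Adj x y → x ∈ S → y ∈ S → (x ∈ K ↔ y ∈ K))
    (hS : inBdry d A ∪ outBdry d A ⊆ S) :
    IsClosedForm fun u i => crossingIndicator A K u (u + 𝐞 i) := by
  refine isClosedForm_of_square fun v₁ v₂ v₃ v₄ h₁₂ h₂₃ h₃₄ h₄₁ => ?_
  have hS' {x y} (hxy : (latticeGraph d).Adj x y) : x ∈ A → y ∉ A → x ∈ S ∧ y ∈ S :=
    fun hx hy => ⟨hS (.inl (mem_inBdry_of_adj hxy hx hy)), hS (.inr (mem_outBdry_of_adj hxy hx hy))⟩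
  have := hK _ _ h₁₂; have := hK _ _ h₂₃; have := hK _ _ h₃₄; have := hK _ _ h₄₁
  have := hS' h₁₂; have := hS' h₁₂.symm; have := hS' h₂₃; have := hS' h₂₃.symm
  have := hS' h₃₄; have := hS' h₃₄.symm; have := hS' h₄₁; have := hS' h₄₁.symm
  clear hK hS hS'
  classical
  unfold crossingIndicator
  by_cases v₁ ∈ A <;> by_cases v₂ ∈ A <;> by_cases v₃ ∈ A <;> by_cases v₄ ∈ A <;>
    simp_all [CharTwo.add_self_eq_zero]

lemma isClosedForm_crossingIndicator_of_vplus_vplus {A K S : Set (Fin d → ℤ)}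
    (hK : ∀ x y, (latticeGraph d).Adj x y → x ∈ S → y ∈ S → (x ∈ K ↔ y ∈ K))
    (hS : vplus d (vplus d A) \ A ⊆ S) :
    IsClosedForm fun u i => crossingIndicator A K u (u + 𝐞 i) := by
  refine isClosedForm_of_square fun v₁ v₂ v₃ v₄ h₁₂ h₂₃ h₃₄ h₄₁ => ?_
  have hS₁ {x y} (hxy : (latticeGraph d).Adj x y) : x ∈ A → y ∉ A → y ∈ S :=
    fun hx hy => hS (mem_vplus_vplus_diff_of_adj hxy hx hy)
  have hS₂ {x y z} (hxy : (latticeGraph d).Adj x y) (hyz : (latticeGraph d).Adj y z) :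
      x ∈ A → z ∉ A → z ∈ S :=
    fun hx hz => hS (mem_vplus_vplus_diff_of_adj_adj hxy hyz hx hz)
  have := hK _ _ h₁₂; have := hK _ _ h₂₃; have := hK _ _ h₃₄; have := hK _ _ h₄₁
  have := hS₁ h₁₂; have := hS₁ h₁₂.symm; have := hS₁ h₂₃; have := hS₁ h₂₃.symm
  have := hS₁ h₃₄; have := hS₁ h₃₄.symm; have := hS₁ h₄₁; have := hS₁ h₄₁.symm
  have := hS₂ h₁₂ h₂₃; have := hS₂ h₂₃.symm h₁₂.symm
  have := hS₂ h₂₃ h₃₄; have := hS₂ h₃₄.symm h₂₃.symm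
  clear hK hS hS₁ hS₂
  classical
  unfold crossingIndicator
  by_cases v₁ ∈ A <;> by_cases v₂ ∈ A <;> by_cases v₃ ∈ A <;> by_cases v₄ ∈ A <;>
    simp_all [CharTwo.add_self_eq_zero]

lemma BiConnected.exists_forall_mem_compIn {A S : Set (Fin d → ℤ)} (hA : BiConnected d A)
    (hS : ∀ x y, (latticeGraph d).Adj x y → x ∈ A → y ∉ A → y ∈ S)
    (hclosed : ∀ b, IsClosedForm fun u i =>
      crossingIndicator A (compIn (latticeGraph d) S b) u (u + 𝐞 i)) :
    ∃ b ∈ S, ∀ x y, (latticeGraph d).Adj x y → x ∈ A → y ∉ A →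
      y ∈ compIn (latticeGraph d) S b := by
  obtain ⟨a, b, hab, ha, hb⟩ := hA.exists_adj_mem_not_mem
  have hbS := hS a b hab ha hb
  exact ⟨b, hbS, fun x y hxy hx hy => mem_of_isClosedForm_crossingIndicator hA.2.2.1 hA.2.2.2
    (hclosed b) hab ha hb (mem_compIn_self hbS) hxy hx hy⟩

theorem connectedIn_inBdry_union_outBdry {A : Set (Fin d → ℤ)} (hA : BiConnected d A) :
    ConnectedIn (latticeGraph d) (inBdry d A ∪ outBdry d A) := by
  obtain ⟨b, hbS, hout⟩ := hA.exists_forall_mem_compIn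
    (fun _ _ hxy hx hy => .inr (mem_outBdry_of_adj hxy hx hy))
    (fun _ => isClosedForm_crossingIndicator_of_boundary (fun _ _ hxy => mem_compIn_iff_of_adj hxy)
      subset_rfl)
  refine connectedIn_of_forall_mem_compIn hbS fun x hx => ?_
  rcases hx with ⟨hxA, hx⟩ | ⟨hx, hxA⟩
  · obtain ⟨y, hxy, hy⟩ : ∃ y, (latticeGraph d).Adj x y ∧ y ∉ A := by
      simpa [vminus, hxA] using hx
    exact (mem_compIn_iff_of_adj hxy (.inl ⟨hxA, hx⟩) (.inr (mem_outBdry_of_adj hxy hxA hy))).2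
      (hout x y hxy hxA hy)
  · obtain ⟨y, hy, hyx⟩ := hx.resolve_left hxA
    exact hout y x hyx.symm hy hxA

theorem connectedIn_vplus_vplus_diff {A : Set (Fin d → ℤ)} (hA : BiConnected d A) :
    ConnectedIn (latticeGraph d) (vplus d (vplus d A) \ A) := by
  obtain ⟨b, hbS, hout⟩ := hA.exists_forall_mem_compIn
    (fun _ _ hxy hx hy => mem_vplus_vplus_diff_of_adj hxy hx hy)
    (fun _ => isClosedForm_crossingIndicator_of_vplus_vplus
      (fun _ _ hxy => mem_compIn_iff_of_adj hxy) subset_rfl)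
  refine connectedIn_of_forall_mem_compIn hbS fun x hx => ?_
  obtain ⟨hx, hxA⟩ := hx
  rcases hx with hx | ⟨w, hw, hxw⟩
  · obtain ⟨y, hy, hyx⟩ := hx.resolve_left hxA
    exact hout y x hyx.symm hy hxA
  by_cases hwA : w ∈ A
  · exact hout w x hxw.symm hwA hxA
  obtain ⟨y, hy, hyw⟩ := hw.resolve_left hwA
  exact (mem_compIn_iff_of_adj hxw (Set.mem_sdiff_of_mem (.inr ⟨w, hw, hxw⟩) hxA)
    (mem_vplus_vplus_diff_of_adj hyw.symm hy hwA)).2 (hout y w hyw.symm hy hwA)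

lemma vplus_compl (A : Set (Fin d → ℤ)) : vplus d Aᶜ = (vminus d A)ᶜ := by
  ext u
  simp only [vplus, vminus, Set.mem_compl_iff]
  by_cases hu : u ∈ A <;> simp [hu, and_comm]

lemma diff_vminus_vminus (A : Set (Fin d → ℤ)) :
    A \ vminus d (vminus d A) = vplus d (vplus d Aᶜ) \ Aᶜ := by
  rw [vplus_compl, vplus_compl, Set.sdiff_compl, Set.sdiff_eq, Set.inter_comm]

lemma BiConnected.compl {A : Set (Fin d → ℤ)} (hA : BiConnected d A) : BiConnected d Aᶜ :=
  ⟨by simpa using hA.2.1, by simpa using hA.1, hA.2.2.2, by simpa using hA.2.2.1⟩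

end P3C

theorem stmt7 (d : ℕ) (A : Set (Fin d → ℤ)) (hA : P3C.BiConnected d A) :
    P3C.ConnectedIn (P3C.latticeGraph d) (P3C.inBdry d A ∪ P3C.outBdry d A) ∧
    P3C.ConnectedIn (P3C.latticeGraph d) (P3C.vplus d (P3C.vplus d A) \ A) ∧
    P3C.ConnectedIn (P3C.latticeGraph d) (A \ P3C.vminus d (P3C.vminus d A)) := by
  refine ⟨P3C.connectedIn_inBdry_union_outBdry hA, P3C.connectedIn_vplus_vplus_diff hA, ?_⟩
  rw [P3C.diff_vminus_vminus]
  exact P3C.connectedIn_vplus_vplus_diff hA.compl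
end

section
/- Let n ≥ 2 be an even integer, h ∈ QP_m for some m ∈ ℤ^d, u ∈ ℤ^d, and z ∈ ℤ^d with z ≠ 0. Suppose A ∈ L_{(u, u+n·z)} is a sublevel component of h. Then: (a) if any two distinct members of T_A are disjoint, then A + n·z ∈ L_{(u+n·z, u)}; (b) if the complements of any two distinct members of T_A are disjoint, then A − n·z ∈ L_{(u+n·z, u)}. -/
/-! Translation by a period vector `n • w` is an automorphism of the lattice graph, and
quasi-periodicity makes it shift `h` by the constant `∑ i, w i * m i`. It therefore maps level
sets, sublevel sets and sublevel components of `h` to ones of the same kind at a shifted level, so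
`A ± n • z` are sublevel components and only their separation property is left. If distinct
translates of `A` are disjoint, `u ∈ A` forces `u ∉ A + n • z`. If their complements are disjoint,
then `u + n • z ∉ A` gives `u + 2n • z ∉ A + n • z`, hence `u + 2n • z ∈ A`, that is,
`u + n • z ∈ A - n • z`. -/

namespace P3C

section Components

variable {V W : Type*} {G : SimpleGraph V} {G' : SimpleGraph W}

lemma image_compIn_subset (f : G →g G') (S : Set V) (u : V) :
    f '' compIn G S u ⊆ compIn G' (f '' S) (f u) := by
  rintro _ ⟨w, ⟨hu, hw, hr⟩, rfl⟩
  exact ⟨Set.mem_image_of_mem f hu, Set.mem_image_of_mem f hw,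
    hr.map (SimpleGraph.induceHom f (Set.mapsTo_image f S))⟩

lemma image_compIn (f : G ≃g G') (S : Set V) (u : V) :
    f '' compIn G S u = compIn G' (f '' S) (f u) := by
  refine (image_compIn_subset f.toHom S u).antisymm ?_
  have hsymm := image_compIn_subset f.symm.toHom (f '' S) (f u)
  rw [← Set.image_subset_image_iff f.injective] at hsymm
  simpa [Set.image_image] using hsymm

end Components

def addRightIso (d : ℕ) (t : Fin d → ℤ) : latticeGraph d ≃g latticeGraph d where
  toEquiv := Equiv.addRight t
  map_rel_iff' {v w} := by
    simp only [latticeGraph, Equiv.coe_addRight, Pi.add_apply]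
    refine exists_congr fun i => and_congr (by omega) (forall_congr' fun j => ?_)
    simp

section Shift

variable {d : ℕ} {h : (Fin d → ℤ) → ℤ} {t : Fin d → ℤ} {c : ℤ}

lemma image_add_setOf_ne (hshift : ∀ x, h (x + t) = h x + c) (k : ℤ) :
    (· + t) '' {x | h x ≠ k + 1} = {x | h x ≠ k + c + 1} := by
  ext x
  have hx := hshift (x + -t)
  simp only [Set.image_add_right, Set.mem_preimage, Set.mem_ofPred_eq,
    neg_add_cancel_right] at hx ⊢
  omega

lemma image_add_compIn (S : Set (Fin d → ℤ)) (u : Fin d → ℤ) :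
    (· + t) '' compIn (latticeGraph d) S u = compIn (latticeGraph d) ((· + t) '' S) (u + t) :=
  image_compIn (addRightIso d t) S u

lemma image_add_subLL (hshift : ∀ x, h (x + t) = h x + c) (k : ℤ) (u : Fin d → ℤ) :
    (· + t) '' subLL d h k u = subLL d h (k + c) (u + t) := by
  rw [subLL, subLL, ← image_add_setOf_ne hshift, image_add_compIn]

lemma image_add_subLC (hshift : ∀ x, h (x + t) = h x + c) (k : ℤ) (u v : Fin d → ℤ) :
    (· + t) '' subLC d h k u v = subLC d h (k + c) (u + t) (v + t) := by
  have hcompl : ∀ S : Set (Fin d → ℤ), (· + t) '' Sᶜ = ((· + t) '' S)ᶜ :=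
    (addRightIso d t).toEquiv.image_compl
  rw [subLC, subLC, hcompl, image_add_compIn, hcompl, image_add_subLL hshift]

lemma IsSublevelComponent.image_add (hshift : ∀ x, h (x + t) = h x + c)
    {A : Set (Fin d → ℤ)} (hA : IsSublevelComponent d h A) :
    IsSublevelComponent d h ((· + t) '' A) := by
  obtain ⟨u, v, k, hu, hv, rfl⟩ := hA
  exact ⟨u + t, v + t, k + c, by rw [hshift]; omega, by rw [hshift]; omega,
    image_add_subLC hshift k u v⟩

end Shift

lemma apply_add_zsmul_of_apply_add {G : Type*} [AddCommGroup G] {f : G → ℤ} {g : G} {c : ℤ}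
    (hf : ∀ v, f (v + g) = f v + c) (a : ℤ) (v : G) : f (v + a • g) = f v + a * c := by
  induction a using Int.induction_on generalizing v with
  | zero => simp
  | succ k ih => rw [add_smul, one_smul, ← add_assoc, hf, ih]; ring
  | pred k ih =>
    have hstep := hf (v + (-(k : ℤ) - 1) • g)
    rw [add_assoc, ← add_one_zsmul, sub_add_cancel, ih] at hstep
    linarith

lemma IsQP.apply_add_zsmul {n d : ℕ} {m : Fin d → ℤ} {h : (Fin d → ℤ) → ℤ} (hh : IsQP n d m h)
    (v w : Fin d → ℤ) : h (v + (n : ℤ) • w) = h v + ∑ i, w i * m i := by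
  have hdecomp : (n : ℤ) • w = ∑ i, w i • Pi.single i (n : ℤ) := by
    ext j
    simp [Finset.sum_apply, Pi.single_apply, mul_comm]
  have hsum : ∀ (s : Finset (Fin d)) (v : Fin d → ℤ),
      h (v + ∑ i ∈ s, w i • Pi.single i (n : ℤ)) = h v + ∑ i ∈ s, w i * m i := by
    intro s
    induction s using Finset.induction_on with
    | empty => simp
    | insert i s hi ih =>
      intro v
      rw [Finset.sum_insert hi, Finset.sum_insert hi, ← add_assoc, ih,
        apply_add_zsmul_of_apply_add (fun v => hh.2 v i)]
      ring
  rw [hdecomp, hsum]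

lemma mem_translates_self (n d : ℕ) (U : Set (Fin d → ℤ)) : U ∈ translates n d U :=
  ⟨0, fun _ => dvd_zero _, by simp⟩

lemma image_add_zsmul_mem_translates (n d : ℕ) (U : Set (Fin d → ℤ)) (z : Fin d → ℤ) :
    (· + (n : ℤ) • z) '' U ∈ translates n d U :=
  ⟨(n : ℤ) • z, fun i => by simp, rfl⟩

end P3C

open P3C

theorem stmt19_general (n d : ℕ)
    (m : Fin d → ℤ) (h : (Fin d → ℤ) → ℤ) (hh : P3C.IsQP n d m h)
    (u z : Fin d → ℤ)
    (A : Set (Fin d → ℤ)) (hA : A ∈ P3C.sepComps d h u (u + (n : ℤ) • z)) :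
    ((∀ A1 ∈ P3C.translates n d A, ∀ A2 ∈ P3C.translates n d A, A1 ≠ A2 → A1 ∩ A2 = ∅) →
      ((fun x => x + (n : ℤ) • z) '' A) ∈ P3C.sepComps d h (u + (n : ℤ) • z) u) ∧
    ((∀ A1 ∈ P3C.translates n d A, ∀ A2 ∈ P3C.translates n d A, A1 ≠ A2 → A1ᶜ ∩ A2ᶜ = ∅) →
      ((fun x => x + (-(n : ℤ)) • z) '' A) ∈ P3C.sepComps d h (u + (n : ℤ) • z) u) := by
  obtain ⟨hAcomp, huA, hvA⟩ := hA
  have hcomp : ∀ w : Fin d → ℤ, IsSublevelComponent d h ((· + (n : ℤ) • w) '' A) := fun w =>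
    hAcomp.image_add (hh.apply_add_zsmul · w)
  have hmem : ∀ x, x ∈ (· + (n : ℤ) • z) '' A ↔ x - (n : ℤ) • z ∈ A := by
    simp [Set.image_add_right, sub_eq_add_neg]
  have hne : A ≠ (· + (n : ℤ) • z) '' A := fun heq =>
    hvA (heq ▸ Set.mem_image_of_mem _ huA)
  have htr := image_add_zsmul_mem_translates n d A z
  refine ⟨fun hdisj => ⟨hcomp z, Set.mem_image_of_mem _ huA, fun hu => ?_⟩,
    fun hcodisj => ⟨?_, ?_, ?_⟩⟩
  · exact (Set.eq_empty_iff_forall_notMem.1 (hdisj _ (mem_translates_self n d A) _ htr hne)) u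
      ⟨huA, hu⟩
  · simpa only [neg_smul, smul_neg] using hcomp (-z)
  · have hcover := Set.eq_empty_iff_forall_notMem.1
      (hcodisj _ (mem_translates_self n d A) _ htr hne) (u + (n : ℤ) • z + (n : ℤ) • z)
    have hshifted : u + (n : ℤ) • z + (n : ℤ) • z ∈ A := by
      by_contra hout
      exact hcover ⟨hout, by rwa [Set.mem_compl_iff, hmem, add_sub_cancel_right]⟩
    simpa [Set.image_add_right] using hshifted
  · simpa [Set.image_add_right] using hvA

theorem stmt19 (n d : ℕ) (hn : Even n) (hn2 : 2 ≤ n)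
    (m : Fin d → ℤ) (h : (Fin d → ℤ) → ℤ) (hh : P3C.IsQP n d m h)
    (u z : Fin d → ℤ) (hz : z ≠ 0)
    (A : Set (Fin d → ℤ)) (hA : A ∈ P3C.sepComps d h u (u + (n : ℤ) • z)) :
    ((∀ A1 ∈ P3C.translates n d A, ∀ A2 ∈ P3C.translates n d A, A1 ≠ A2 → A1 ∩ A2 = ∅) →
      ((fun x => x + (n : ℤ) • z) '' A) ∈ P3C.sepComps d h (u + (n : ℤ) • z) u) ∧
    ((∀ A1 ∈ P3C.translates n d A, ∀ A2 ∈ P3C.translates n d A, A1 ≠ A2 → A1ᶜ ∩ A2ᶜ = ∅) →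
      ((fun x => x + (-(n : ℤ)) • z) '' A) ∈ P3C.sepComps d h (u + (n : ℤ) • z) u) :=
  stmt19_general n d m h hh u z A hA
end
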